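/- Let K be a field of characteristic zero, n ≥ 2, and let D = ∂_{x_1} + Σ_{i=2}^{n} (a_i·x_i + b_i)·∂_{x_i} be the K-derivation of K[x_1,…,x_n] with a_i, b_i ∈ K[x_1,…,x_{i-1}] for each i. If D is a simple derivation, then a_2 ∈ K[x_1] has degree at least 1, i.e., a_2 is not constant. -/

import Mathlib

/-!
If `a₂` were a constant `c`, solve `f' = c f + b₂` in `K[x₁]` (possible in characteristic
zero). Then `p = x₂ - f(x₁)` satisfies `D p = c p`, so the principal ideal `(p)` is `D`-stable; it is
neither `0` nor the whole ring, since `p` vanishes at some point but not everywhere.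
-/

open MvPolynomial

/-- A `K`-subspace `M` of `R` is a Mathieu–Zhao space if for all `a, b ∈ R` such that
`a ^ m ∈ M` for all `m ≥ 1`, there exists `N` such that `b * a ^ m ∈ M` for all `m ≥ N`. -/
def IsMathieuZhao (K : Type*) {R : Type*} [Field K] [CommRing R] [Algebra K R]
    (M : Submodule K R) : Prop :=
  ∀ a b : R, (∀ m : ℕ, 1 ≤ m → a ^ m ∈ M) →
    ∃ N : ℕ, ∀ m : ℕ, N ≤ m → b * a ^ m ∈ M

/-- A `K`-derivation `D` of `R` is simple if the only ideals `I` of `R` with `D(I) ⊆ I`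
are `0` and `R`. -/
def Derivation.IsSimple {K R : Type*} [CommRing K] [CommRing R] [Algebra K R]
    (D : Derivation K R R) : Prop :=
  ∀ I : Ideal R, (∀ a ∈ I, D a ∈ I) → I = ⊥ ∨ I = ⊤

namespace Polynomial

variable {K : Type*} [Field K] [CharZero K]

theorem exists_derivative_eq (b : K[X]) : ∃ f : K[X], derivative f = b := by
  refine ⟨∑ k ∈ Finset.range (b.natDegree + 1), monomial (k + 1) (b.coeff k / (k + 1)), ?_⟩
  conv_rhs => rw [b.as_sum_range' (b.natDegree + 1) (Nat.lt_succ_self _)]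
  rw [map_sum]
  refine Finset.sum_congr rfl fun k _ => ?_
  rw [derivative_monomial, Nat.cast_add_one, div_mul_cancel₀ _ (Nat.cast_add_one_ne_zero k),
    Nat.add_sub_cancel]

/-- For `c ≠ 0` the solution is `f = -∑ₖ c^{-(k+1)} b⁽ᵏ⁾`: then `c f - f'` telescopes
to `-b`, since `b⁽ᵏ⁾ = 0` for `k > deg b`. -/
theorem exists_derivative_eq_C_mul_add (c : K) (b : K[X]) :
    ∃ f : K[X], derivative f = C c * f + b := by
  rcases eq_or_ne c 0 with rfl | hc
  · simpa using exists_derivative_eq b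
  set t : ℕ → K[X] := fun k => C (c⁻¹ ^ k) * derivative^[k] b
  have hc_mul (k : ℕ) : C c * (C (c⁻¹ ^ (k + 1)) * derivative^[k] b) = t k := by
    rw [← mul_assoc, ← C_mul, pow_succ', ← mul_assoc, mul_inv_cancel₀ hc, one_mul]
  have hderiv (k : ℕ) : derivative (C (c⁻¹ ^ (k + 1)) * derivative^[k] b) = t (k + 1) := by
    rw [derivative_C_mul, ← Function.iterate_succ_apply' derivative]
  have ht : t (b.natDegree + 1) = 0 := by
    simp only [t, iterate_derivative_eq_zero (Nat.lt_succ_self _), mul_zero]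
  set g := ∑ k ∈ Finset.range (b.natDegree + 1), C (c⁻¹ ^ (k + 1)) * derivative^[k] b
  have telescope : C c * g - derivative g = b := by
    rw [Finset.mul_sum, map_sum, ← Finset.sum_sub_distrib]
    simp only [hc_mul, hderiv]
    rw [Finset.sum_range_sub', ht, sub_zero]
    simp [t]
  exact ⟨-g, by rw [map_neg]; linear_combination telescope⟩

end Polynomial

namespace MvPolynomial

variable {R σ : Type*} [CommRing R] {i j : σ}

theorem exists_aeval_X_eq_of_mem_supported_singleton {p : MvPolynomial σ R}
    (hp : p ∈ supported R {i}) : ∃ q : Polynomial R, Polynomial.aeval (X i) q = p := by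
  rwa [supported_eq_adjoin_X, Set.image_singleton, Algebra.adjoin_singleton_eq_range_aeval] at hp

theorem eq_C_of_mem_supported_singleton_of_degreeOf_eq_zero {p : MvPolynomial σ R}
    (hp : p ∈ supported R {i}) (hdeg : degreeOf i p = 0) : p = C (coeff 0 p) := by
  refine vars_eq_empty_iff_eq_C.1 (Finset.eq_empty_of_forall_notMem fun k hk => ?_)
  obtain rfl : k = i := mem_supported.1 hp hk
  exact mem_vars_iff_degreeOf_ne_zero.1 hk hdeg

theorem aeval_single_X_sub_aeval_X [DecidableEq σ] (hij : i ≠ j) (f : Polynomial R) (t : R) :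
    aeval (Pi.single j t) ((X j : MvPolynomial σ R) - Polynomial.aeval (X i) f) =
      t - f.eval 0 := by
  rw [map_sub, aeval_X, ← Polynomial.aeval_algHom_apply, aeval_X, Pi.single_eq_same,
    Pi.single_eq_of_ne hij, Polynomial.coe_aeval_eq_eval]

theorem span_X_sub_aeval_X_ne_bot [Nontrivial R] (hij : i ≠ j) (f : Polynomial R) :
    Ideal.span {(X j : MvPolynomial σ R) - Polynomial.aeval (X i) f} ≠ ⊥ := by
  classical
  rw [Ne, Ideal.span_singleton_eq_bot]
  intro h
  simpa [h] using aeval_single_X_sub_aeval_X hij f (f.eval 0 + 1)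

theorem span_X_sub_aeval_X_ne_top [Nontrivial R] (hij : i ≠ j) (f : Polynomial R) :
    Ideal.span {(X j : MvPolynomial σ R) - Polynomial.aeval (X i) f} ≠ ⊤ := by
  classical
  rw [Ne, Ideal.span_singleton_eq_top]
  intro h
  have := h.map (aeval (Pi.single j (f.eval 0)))
  rw [aeval_single_X_sub_aeval_X hij, sub_self] at this
  exact not_isUnit_zero this

end MvPolynomial

theorem Derivation.map_mem_span_singleton_of_dvd {K R : Type*} [CommRing K] [CommRing R]
    [Algebra K R] (D : Derivation K R R) {p : R} (hp : p ∣ D p) {g : R}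
    (hg : g ∈ Ideal.span {p}) : D g ∈ Ideal.span {p} := by
  obtain ⟨h, rfl⟩ := Ideal.mem_span_singleton.1 hg
  rw [Ideal.mem_span_singleton, Derivation.leibniz, smul_eq_mul, smul_eq_mul]
  exact dvd_add (dvd_mul_right p _) (dvd_mul_of_dvd_right hp h)

theorem Derivation.not_isSimple_of_map_X_eq_C_mul_X_add {K σ : Type*} [Field K] [CharZero K]
    {i j : σ} (hij : i ≠ j) (D : Derivation K (MvPolynomial σ K) (MvPolynomial σ K))
    (hi : D (X i) = 1) (c : K) (q : Polynomial K)
    (hj : D (X j) = C c * X j + Polynomial.aeval (X i) q) : ¬ D.IsSimple := by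
  intro hD
  obtain ⟨f, hf⟩ := Polynomial.exists_derivative_eq_C_mul_add c q
  set p : MvPolynomial σ K := X j - Polynomial.aeval (X i) f
  have hDp : D p = C c * p := by
    simp only [p, map_sub, hj, Derivation.map_aeval, hi, smul_eq_mul, mul_one, hf, map_add,
      map_mul, Polynomial.aeval_C, algebraMap_eq]
    ring
  rcases hD _ fun g => D.map_mem_span_singleton_of_dvd ⟨C c, by rw [hDp, mul_comm]⟩ with h | h
  · exact span_X_sub_aeval_X_ne_bot hij f h
  · exact span_X_sub_aeval_X_ne_top hij f h

/-- For `D = ∂_{x₁} + Σ_{i=2}^{n} (aᵢ xᵢ + bᵢ) ∂_{xᵢ}` with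
`aᵢ, bᵢ ∈ K[x₁, …, x_{i-1}]`: if `D` is simple, then `a₂ ∈ K[x₁]` has degree
at least 1 (in `x₁`), i.e. `a₂` is not constant. -/
theorem statement8 (K : Type*) [Field K] [CharZero K]
    (n : ℕ) (hn : 2 ≤ n)
    (a b : Fin n → MvPolynomial (Fin n) K)
    (ha : ∀ i : Fin n, a i ∈ supported K {j : Fin n | j < i})
    (hb : ∀ i : Fin n, b i ∈ supported K {j : Fin n | j < i})
    (D : Derivation K (MvPolynomial (Fin n) K) (MvPolynomial (Fin n) K))
    (hD1 : D (X (⟨0, by omega⟩ : Fin n)) = 1)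
    (hDi : ∀ i : Fin n, i ≠ ⟨0, by omega⟩ → D (X i) = a i * X i + b i)
    (hD : Derivation.IsSimple D) :
    1 ≤ degreeOf (⟨0, by omega⟩ : Fin n) (a ⟨1, by omega⟩) := by
  set x₁ : Fin n := ⟨0, by omega⟩
  set x₂ : Fin n := ⟨1, by omega⟩
  have hx : x₁ ≠ x₂ := by simp [x₁, x₂, Fin.ext_iff]
  have hlt : {j : Fin n | j < x₂} = {x₁} := by
    ext j
    simp only [Set.mem_ofPred_eq, Set.mem_singleton_iff, Fin.lt_def, Fin.ext_iff, x₁, x₂]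
    omega
  by_contra! hdeg
  obtain ⟨c, hc⟩ : ∃ c, a x₂ = C c := ⟨_,
    eq_C_of_mem_supported_singleton_of_degreeOf_eq_zero (hlt ▸ ha x₂) (Nat.lt_one_iff.1 hdeg)⟩
  obtain ⟨q, hq⟩ := exists_aeval_X_eq_of_mem_supported_singleton (hlt ▸ hb x₂)
  refine D.not_isSimple_of_map_X_eq_C_mul_X_add hx hD1 c q ?_ hD
  rw [hDi x₂ hx.symm, hc, hq]
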